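/- There exists a constant C > 0 such that for all t ≥ 0 and every δ > 0, ∫₀ᵗ (1+t-s)^{-1/2} (1+s)^{-1/2} e^{-δ s} ds ≤ C δ^{-1} (1+t)^{-1/2}. -/

import Mathlib

/-!
Since `(1 + t - s) (1 + s) = (1 + t) + s (t - s) ≥ 1 + t` on `[0, t]`, the algebraic kernel is bounded
by `(1 + t)^(-1/2)`, which comes out of the integral; what is left is `∫₀ᵗ e^{-δ s} ds ≤ δ⁻¹`.
So `C = 1` works.
-/

open Real

theorem integral_exp_neg_mul_le_inv {δ : ℝ} (hδ : 0 < δ) (t : ℝ) :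
    ∫ s in (0:ℝ)..t, exp (-δ * s) ≤ δ⁻¹ := by
  have h : ∫ s in (0:ℝ)..t, exp (-δ * s) = δ⁻¹ * (1 - exp (-δ * t)) := by
    rw [intervalIntegral.integral_comp_mul_left (fun x => exp x) (neg_ne_zero.2 hδ.ne'),
      integral_exp, mul_zero, exp_zero, smul_eq_mul, inv_neg]
    ring
  rw [h]
  exact mul_le_of_le_one_right (inv_nonneg.2 hδ.le) (sub_le_self _ (exp_nonneg _))

theorem one_add_sub_rpow_mul_one_add_rpow_le {r s t : ℝ} (hr : r ≤ 0) (hs : 0 ≤ s)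
    (hst : s ≤ t) : (1 + t - s) ^ r * (1 + s) ^ r ≤ (1 + t) ^ r := by
  rw [← mul_rpow (by linarith) (by linarith)]
  exact rpow_le_rpow_of_nonpos (by linarith) (by nlinarith) hr

theorem stmt7 :
    ∃ C > 0, ∀ t : ℝ, 0 ≤ t → ∀ δ : ℝ, 0 < δ →
      (∫ s in (0:ℝ)..t, (1 + t - s) ^ (-(1:ℝ)/2) * (1 + s) ^ (-(1:ℝ)/2) * Real.exp (-δ * s))
        ≤ C * δ⁻¹ * (1 + t) ^ (-(1:ℝ)/2) := by
  refine ⟨1, one_pos, fun t ht δ hδ => ?_⟩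
  have hkernel : ContinuousOn (fun s => (1 + t - s) ^ (-(1:ℝ)/2) * (1 + s) ^ (-(1:ℝ)/2))
      (Set.uIcc 0 t) := by
    rw [Set.uIcc_of_le ht]
    refine ContinuousOn.mul ?_ ?_ <;> refine ContinuousOn.rpow_const (by fun_prop) ?_ <;>
      intro s hs <;> exact Or.inl (by linarith [hs.1, hs.2])
  calc ∫ s in (0:ℝ)..t, (1 + t - s) ^ (-(1:ℝ)/2) * (1 + s) ^ (-(1:ℝ)/2) * exp (-δ * s)
      ≤ ∫ s in (0:ℝ)..t, (1 + t) ^ (-(1:ℝ)/2) * exp (-δ * s) := by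
        refine intervalIntegral.integral_mono_on ht
          ((hkernel.mul (by fun_prop)).intervalIntegrable)
          ((continuous_const.mul (by fun_prop)).intervalIntegrable _ _) fun s hs => ?_
        exact mul_le_mul_of_nonneg_right
          (one_add_sub_rpow_mul_one_add_rpow_le (by norm_num) hs.1 hs.2) (exp_nonneg _)
    _ = (1 + t) ^ (-(1:ℝ)/2) * ∫ s in (0:ℝ)..t, exp (-δ * s) :=
        intervalIntegral.integral_const_mul _ _
    _ ≤ (1 + t) ^ (-(1:ℝ)/2) * δ⁻¹ :=
        mul_le_mul_of_nonneg_left (integral_exp_neg_mul_le_inv hδ t) (by positivity)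
    _ = 1 * δ⁻¹ * (1 + t) ^ (-(1:ℝ)/2) := by ring
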